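/- arXiv:math/0701529 — 2 statements merged into one kernel-verified Lean document; each statement's English description precedes it below -/
import Mathlib

section
/- Let S ⊆ ℤ^d be an ℕA-set, and make K[ℤ^d] a right D(S)-module via formal adjoints: P acts on the right by x ↦ P*(x), where (t^a f(s))* = f(−s) t^a. Suppose Λ ⊆ ℤ^d satisfies: a ∈ Λ and b ≼_{S,{0}} a imply b ∈ Λ. Then K[−Λ] = ⊕_{b∈Λ} K t^{−b} is a right D(S)-submodule of K[ℤ^d]. -/
open Function

/-- Lattice `ℤ^d`. -/
abbrev Zd (d : ℕ) := Fin d → ℤ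

noncomputable section

namespace SaitoTakahashi

variable {d : ℕ}

/-- The affine semigroup `ℕA` generated by the finite set `A ⊆ ℤ^d`. -/
def NA (A : Finset (Zd d)) : AddSubmonoid (Zd d) := AddSubmonoid.closure (A : Set (Zd d))

/-- The group `ℤA` generated by `A`. -/
def ZA (A : Finset (Zd d)) : AddSubgroup (Zd d) := AddSubgroup.closure (A : Set (Zd d))

/-- Realification of a lattice point. -/
def toR (a : Zd d) : Fin d → ℝ := fun i => (a i : ℝ)

/-- The real cone `ℝ≥0 A`. -/
def coneOf (A : Finset (Zd d)) : Set (Fin d → ℝ) :=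
  { x | ∃ c : Zd d → ℝ, (∀ a, 0 ≤ c a) ∧ x = ∑ a ∈ A, c a • toR a }

/-- The cone `ℝ≥0 A` is strongly convex. -/
def StronglyConvex (A : Finset (Zd d)) : Prop :=
  ∀ x ∈ coneOf A, -x ∈ coneOf A → x = 0

/-- `B = A ∩ τ` for a face `τ` of the cone `ℝ≥0 A`, i.e. `B` is the subset of `A`
cut out by an integral supporting functional which is nonnegative on `A`. -/
def IsFace (A B : Finset (Zd d)) : Prop :=
  ∃ G : Zd d →+ ℤ, B ⊆ A ∧ (∀ a ∈ A, 0 ≤ G a) ∧ ∀ a ∈ A, (G a = 0 ↔ a ∈ B)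

/-- `F` is the primitive integral support function of a facet of `ℝ≥0 A`:
nonnegative on the cone, surjective onto `ℤ` (primitivity, using `ℤA = ℤ^d`),
and its zero set in the cone is a face of dimension `d - 1`. -/
def IsFacetFn (A : Finset (Zd d)) (F : Zd d →+ ℤ) : Prop :=
  (∀ a ∈ A, 0 ≤ F a) ∧ Surjective F ∧
    Module.finrank ℝ ↥(Submodule.span ℝ (toR '' {a : Zd d | a ∈ A ∧ F a = 0})) = d - 1

/-- The set `A ∩ σ` for the facet with primitive integral support function `F`. -/
def facetSet (A : Finset (Zd d)) (F : Zd d →+ ℤ) : Finset (Zd d) :=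
  A.filter fun a => F a = 0

/-- `S` is an `ℕA`-set: `S + ℕA ⊆ S`. -/
def IsNASet (A : Finset (Zd d)) (S : Set (Zd d)) : Prop :=
  ∀ s ∈ S, ∀ a ∈ NA A, s + a ∈ S

/-- `S` is a finitely generated `ℕA`-set. -/
def IsFGNASet (A : Finset (Zd d)) (S : Set (Zd d)) : Prop :=
  IsNASet A S ∧ ∃ G : Finset (Zd d), S = { x | ∃ g ∈ G, ∃ a ∈ NA A, x = g + a }

/-- `S` is scored: `S = ⋂_{σ facet} { a ∈ ℤ^d : F_σ(a) ∈ F_σ(S) }`. -/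
def IsScored (A : Finset (Zd d)) (S : Set (Zd d)) : Prop :=
  S = { x : Zd d | ∀ F : Zd d →+ ℤ, IsFacetFn A F → F x ∈ F '' S }

/-- `S + ℤ(A ∩ τ)` where `B = A ∩ τ`. -/
def plusZ (S : Set (Zd d)) (B : Finset (Zd d)) : Set (Zd d) :=
  { x | ∃ s ∈ S, ∃ z ∈ AddSubgroup.closure (B : Set (Zd d)), x = s + z }

/-- The coset `b + ℤ(A ∩ τ)` where `B = A ∩ τ`. -/
def coset (b : Zd d) (B : Finset (Zd d)) : Set (Zd d) :=
  { x | x - b ∈ AddSubgroup.closure (B : Set (Zd d)) }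

/-- The standard-expression setting of the paper:
`S = S_c \ ⋃ᵢ (bᵢ + ℤ(A∩τᵢ))`, where `S_c` is a finitely generated scored
`ℕA`-set (the scored closure of `S`), `bᵢ ∈ S_c`, the `τᵢ` are faces of `ℝ≥0 A`
(encoded by `Bf i = A ∩ τᵢ`), and `F_σ(S) = F_σ(S_c)` for every facet `σ`. -/
structure Setting (A : Finset (Zd d)) (Sc S : Set (Zd d)) {m : ℕ}
    (b : Fin m → Zd d) (Bf : Fin m → Finset (Zd d)) : Prop where
  latt : ZA A = ⊤
  convex : StronglyConvex A
  fg : IsFGNASet A Sc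
  scored : IsScored A Sc
  bIn : ∀ i, b i ∈ Sc
  face : ∀ i, IsFace A (Bf i)
  expr : S = Sc \ ⋃ i, coset (b i) (Bf i)
  sameF : ∀ F : Zd d →+ ℤ, IsFacetFn A F → F '' S = F '' Sc

/-- The expression `S = S_c \ ⋃ᵢ (bᵢ + ℤ(A∩τᵢ))` is irredundant. -/
def Irredundant (Sc S : Set (Zd d)) {m : ℕ}
    (b : Fin m → Zd d) (Bf : Fin m → Finset (Zd d)) : Prop :=
  ∀ i, Sc \ ⋃ j, ⋃ (_ : j ≠ i), coset (b j) (Bf j) ≠ S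

section Kside

variable (K : Type) [Field K]

/-- A lattice point as a point of `K^d`. -/
def toK (a : Zd d) : Fin d → K := fun i => (a i : K)

/-- The vanishing ideal `𝕀(V) ⊆ K[s₁,…,s_d]` of a subset `V ⊆ K^d`. -/
def vIdeal (V : Set (Fin d → K)) : Ideal (MvPolynomial (Fin d) K) :=
  ⨅ v ∈ V, RingHom.ker (MvPolynomial.eval v)

/-- `Ω_{S,S'}(a) = S \ (−a + S')`. -/
def Omega (S S' : Set (Zd d)) (a : Zd d) : Set (Zd d) := S \ { x | a + x ∈ S' }

/-- The `K`-algebra map `f(s) ↦ f(s − c)`. -/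
def shiftHom (c : Fin d → K) : MvPolynomial (Fin d) K →+* MvPolynomial (Fin d) K :=
  MvPolynomial.eval₂Hom MvPolynomial.C (fun i => MvPolynomial.X i - MvPolynomial.C (c i))

/-- The translate `I + c = { f(s − c) : f ∈ I }` of an ideal of `K[s]`. -/
def shiftIdeal (I : Ideal (MvPolynomial (Fin d) K)) (c : Fin d → K) :
    Ideal (MvPolynomial (Fin d) K) :=
  I.map (shiftHom K c)

/-- The `K`-span `Kτ` of a face, where `B = A ∩ τ`. -/
def spanK (B : Finset (Zd d)) : Submodule K (Fin d → K) :=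
  Submodule.span K (toK K '' (B : Set (Zd d)))

/-- `lam` is (a representative of) an element of `E(S)_τ(α)`:
`lam ∈ Kτ` and `α − lam ∈ S + ℤ(A∩τ)`, where `B = A ∩ τ`. -/
def memE (S : Set (Zd d)) (B : Finset (Zd d)) (α lam : Fin d → K) : Prop :=
  lam ∈ spanK K B ∧
    ∃ s ∈ S, ∃ z ∈ AddSubgroup.closure (B : Set (Zd d)), α - lam = toK K s + toK K z

/-- The `K`-linear extension of an integral linear form `F` to `K^d`. -/
def FK (F : Zd d →+ ℤ) (v : Fin d → K) : K :=
  ∑ i, ((F (Pi.single i 1) : ℤ) : K) * v i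

/-- The affine translate `α + Kτ ⊆ K^d`, where `B = A ∩ τ`. -/
def aff (α : Fin d → K) (B : Finset (Zd d)) : Set (Fin d → K) :=
  { x | ∃ lam ∈ spanK K B, x = α + lam }

end Kside

end SaitoTakahashi

namespace SaitoTakahashi


section Aux

variable {d : ℕ} {K : Type} [Field K]

private lemma vanish_span_aux [CharZero K] (f : MvPolynomial (Fin d) K)
    (B : Finset (Fin d → K)) :
    ∀ (p : Fin d → K),
      (∀ n : (Fin d → K) → ℕ,
        MvPolynomial.eval (p + ∑ v ∈ B, (n v : K) • v) f = 0) →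
      ∀ x ∈ Submodule.span K (B : Set (Fin d → K)),
        MvPolynomial.eval (p + x) f = 0 := by
  classical
  induction B using Finset.induction_on with
  | empty =>
    intro p h x hx
    simp only [Finset.coe_empty, Submodule.span_empty, Submodule.mem_bot] at hx
    subst hx
    simpa using h 0
  | @insert v B hvB ih =>
    intro p h x hx
    rw [Finset.coe_insert, Submodule.mem_span_insert] at hx
    obtain ⟨c, y, hy, rfl⟩ := hx
    -- step: for all n₀ : ℕ, eval (p + n₀ • v + y) f = 0
    have step : ∀ n₀ : ℕ, MvPolynomial.eval (p + (n₀ : K) • v + y) f = 0 := by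
      intro n₀
      refine ih (p + (n₀ : K) • v) ?_ y hy
      intro n
      have := h (Function.update n v n₀)
      rw [Finset.sum_insert hvB] at this
      have hsum : ∑ u ∈ B, ((Function.update n v n₀) u : K) • u
          = ∑ u ∈ B, (n u : K) • u := by
        refine Finset.sum_congr rfl fun u hu => ?_
        rw [Function.update_of_ne (by intro hne; subst hne; exact hvB hu)]
      rw [Function.update_self, hsum] at this
      convert this using 2
      abel
    -- one-variable polynomial
    set q : Polynomial K :=
      MvPolynomial.eval₂ Polynomial.C
        (fun i => Polynomial.C (p i + y i) + Polynomial.C (v i) * Polynomial.X) f with hqdef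
    have hq : ∀ t : K, Polynomial.eval t q
        = MvPolynomial.eval (fun i => p i + y i + v i * t) f := by
      intro t
      rw [hqdef, show Polynomial.eval t = ⇑(Polynomial.evalRingHom t) from rfl,
        MvPolynomial.eval₂_comp_left (Polynomial.evalRingHom t)]
      have h1 : (Polynomial.evalRingHom t).comp Polynomial.C = RingHom.id K := by
        ext a; simp
      rw [h1, MvPolynomial.eval₂_id]
      have h2 : (⇑(Polynomial.evalRingHom t) ∘ fun i =>
          Polynomial.C (p i + y i) + Polynomial.C (v i) * Polynomial.X)
          = fun i => p i + y i + v i * t := by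
        funext i; simp
      rw [h2]
    have hq0 : q = 0 := by
      apply Polynomial.eq_zero_of_infinite_isRoot
      apply Set.infinite_of_injective_forall_mem (f := fun n : ℕ => (n : K))
        Nat.cast_injective
      intro n
      show Polynomial.eval ((n : K)) q = 0
      rw [hq]
      have hpt : (fun i => p i + y i + v i * (n : K)) = p + (n : K) • v + y := by
        funext i
        simp only [Pi.add_apply, Pi.smul_apply, smul_eq_mul]
        ring
      rw [hpt]; exact step n
    have hc := hq c
    rw [hq0] at hc
    simp only [Polynomial.eval_zero] at hc
    have hpt : (fun i => p i + y i + v i * c) = p + (c • v + y) := by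
      funext i
      simp only [Pi.add_apply, Pi.smul_apply, smul_eq_mul]
      ring
    rw [hpt] at hc
    exact hc.symm

private lemma toK_injective [CharZero K] : Function.Injective (toK K (d := d)) := by
  intro x y h
  funext i
  have := congrFun h i
  simpa [toK] using this

private lemma toK_mem_span (B : Finset (Zd d)) {z : Zd d}
    (hz : z ∈ AddSubgroup.closure (B : Set (Zd d))) :
    toK K z ∈ Submodule.span K (toK K '' (B : Set (Zd d))) := by
  induction hz using AddSubgroup.closure_induction with
  | mem x hx => exact Submodule.subset_span ⟨x, hx, rfl⟩
  | zero =>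
    have : toK K (0 : Zd d) = 0 := by funext i; simp [toK]
    rw [this]; exact Submodule.zero_mem _
  | add x y _ _ hx hy =>
    have : toK K (x + y) = toK K x + toK K y := by
      funext i; simp [toK]
    rw [this]; exact Submodule.add_mem _ hx hy
  | neg x _ hx =>
    have : toK K (-x) = -(toK K x) := by funext i; simp [toK]
    rw [this]; exact Submodule.neg_mem _ hx

end Aux

/-- Lemma 6.1. Make `K[ℤ^d]` a right `D(S)`-module via formal
adjoints, so that `(t^a f(s))^* · t^{−b} = f(b − a) t^{a−b}`. If `Λ ⊆ ℤ^d`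
satisfies: `a ∈ Λ` and `b ≼_{S,{0}} a` imply `b ∈ Λ`, then `K[−Λ]` is a right
`D(S)`-submodule of `K[ℤ^d]`; i.e. for `b ∈ Λ`, `a ∈ ℤ^d` and `f ∈ 𝕀(Ω_S(a))`,
if `f(b − a) ≠ 0` then `b − a ∈ Λ`. -/
theorem right_submodule_of_order_ideal {d m : ℕ}
    (K : Type) [Field K] [IsAlgClosed K] [CharZero K]
    (A : Finset (Zd d)) (Sc S : Set (Zd d))
    (b : Fin m → Zd d) (Bf : Fin m → Finset (Zd d))
    (hset : Setting A Sc S b Bf) (hSna : IsNASet A S)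
    (Λ : Set (Zd d))
    (hΛ : ∀ aa ∈ Λ, ∀ bb : Zd d,
      (∀ B' : Finset (Zd d), IsFace A B' →
        ∀ lam, memE K S B' (toK K bb) lam → memE K S B' (toK K aa) lam) →
      bb ∈ Λ) :
    ∀ bb ∈ Λ, ∀ a : Zd d, ∀ f : MvPolynomial (Fin d) K,
      (∀ x ∈ Omega S S a, MvPolynomial.eval (toK K x) f = 0) →
      MvPolynomial.eval (toK K (bb - a)) f ≠ 0 → bb - a ∈ Λ := by
  classical
  intro bb hbb a f hf hne
  refine hΛ bb hbb (bb - a) ?_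
  intro B' hface lam hmem
  obtain ⟨G, hBA, -, -⟩ := hface
  obtain ⟨hlam, s, hs, z, hz, heq⟩ := hmem
  refine ⟨hlam, ?_⟩
  by_cases hcase : ∃ w ∈ AddSubgroup.closure (B' : Set (Zd d)), a + s + w ∈ S
  · obtain ⟨w, hwgrp, hwS⟩ := hcase
    refine ⟨a + s + w, hwS, z - w, sub_mem hz hwgrp, ?_⟩
    funext i
    have h1 := congrFun heq i
    simp only [toK, Pi.sub_apply, Pi.add_apply] at h1 ⊢
    push_cast at h1 ⊢
    linear_combination h1
  · exfalso
    push_neg at hcase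
    apply hne
    have hmono : AddSubmonoid.closure (B' : Set (Zd d)) ≤ NA A :=
      AddSubmonoid.closure_le.mpr
        (le_trans (Finset.coe_subset.mpr hBA) AddSubmonoid.subset_closure)
    have hgrp : AddSubmonoid.closure (B' : Set (Zd d)) ≤
        (AddSubgroup.closure (B' : Set (Zd d))).toAddSubmonoid :=
      AddSubmonoid.closure_le.mpr AddSubgroup.subset_closure
    have H : ∀ n : (Fin d → K) → ℕ,
        MvPolynomial.eval (toK K s + ∑ v ∈ B'.image (toK K), (n v : K) • v) f = 0 := by
      intro n
      set w : Zd d := ∑ u ∈ B', n (toK K u) • u with hwdef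
      have hwmem : w ∈ AddSubmonoid.closure (B' : Set (Zd d)) := by
        rw [hwdef]
        refine AddSubmonoid.sum_mem _ fun u hu => ?_
        have hu' : u ∈ AddSubmonoid.closure (B' : Set (Zd d)) :=
          AddSubmonoid.subset_closure hu
        exact nsmul_mem hu' (n (toK K u))
      have hswS : s + w ∈ S := hSna s hs w (hmono hwmem)
      have hnotin : a + (s + w) ∉ S := by
        have := hcase w (hgrp hwmem)
        rwa [add_assoc] at this
      have hvan : MvPolynomial.eval (toK K (s + w)) f = 0 :=
        hf (s + w) ⟨hswS, hnotin⟩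
      have hpt : toK K s + ∑ v ∈ B'.image (toK K), (n v : K) • v = toK K (s + w) := by
        rw [Finset.sum_image fun x _ y _ hxy => toK_injective hxy]
        funext i
        simp only [toK, Pi.add_apply, Finset.sum_apply, Pi.smul_apply, smul_eq_mul,
          hwdef]
        push_cast [nsmul_eq_mul]
        ring
      rw [hpt]
      exact hvan
    have hspan : toK K z + lam ∈
        Submodule.span K ((B'.image (toK K) : Finset (Fin d → K)) : Set (Fin d → K)) := by
      rw [Finset.coe_image]
      exact Submodule.add_mem _ (toK_mem_span B' hz) hlam
    have hres := vanish_span_aux f (B'.image (toK K)) (toK K s) H _ hspan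
    have hpt2 : toK K s + (toK K z + lam) = toK K (bb - a) := by
      funext i
      have h1 := congrFun heq i
      simp only [toK, Pi.sub_apply, Pi.add_apply] at h1 ⊢
      push_cast at h1 ⊢
      linear_combination -h1
    rwa [hpt2] at hres


end SaitoTakahashi
end
end

section
/- (Duality ω(ω(S)) = S) Let S be an ℕA-set with standard expression S = S_c \ ⋃_{i=1}^m (b_i + ℤ(A∩τ_i)) and ℬ ≠ ∅; fix (b_τ) ∈ ℬ and define ω(S) accordingly, and define ω(ω(S)) using the same tuple. Then S = { a ∈ ℤ^d : 0 ∈ E(S)_τ(a) for all τ ∈ F̃ } = { a ∈ ℤ^d : b_τ ∉ E(ω(S))_τ(−a) for every τ ∈ F̃ } = ω(ω(S)). -/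
open Function

noncomputable section

namespace SaitoTakahashi

/-- `B` belongs to `F̃ = {facets of ℝ≥0 A} ∪ {τ₁,…,τ_m}` (faces encoded by
their sets of lattice generators `A ∩ τ`). -/
def InFtilde {d m : ℕ} (A : Finset (Zd d)) (Bf : Fin m → Finset (Zd d))
    (B : Finset (Zd d)) : Prop :=
  (∃ F : Zd d →+ ℤ, IsFacetFn A F ∧ B = facetSet A F) ∨ ∃ i, B = Bf i

/-- The tuple `(b_τ)_{τ∈F̃}` (given by representatives `bt B ∈ ℤ^d`) belongs to
the set `ℬ`: each `b_τ ∈ (Kτ ∩ ℤ^d)/ℤ(A∩τ)`, and for all `i` and all `τ ∈ F̃`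
with `τ ⊇ τᵢ` there exists `j` with `τⱼ = τ` and
`bᵢ + b_{τᵢ} ≡ bⱼ + b_τ mod ℤ(A∩τ)`. -/
def MemB {d m : ℕ} (A : Finset (Zd d)) (b : Fin m → Zd d)
    (Bf : Fin m → Finset (Zd d)) (bt : Finset (Zd d) → Zd d) : Prop :=
  (∀ B, InFtilde A Bf B → toR (bt B) ∈ Submodule.span ℝ (toR '' (B : Set (Zd d)))) ∧
  ∀ i, ∀ B, InFtilde A Bf B → Bf i ⊆ B →
    ∃ j, Bf j = B ∧
      (b i + bt (Bf i)) - (b j + bt B) ∈ AddSubgroup.closure (B : Set (Zd d))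

/-- `ω(S) = { a ∈ ℤ^d : −a − b_τ ∉ S + ℤ(A∩τ) for each τ ∈ F̃ }`. -/
def omegaS {d m : ℕ} (A : Finset (Zd d)) (S : Set (Zd d))
    (Bf : Fin m → Finset (Zd d)) (bt : Finset (Zd d) → Zd d) : Set (Zd d) :=
  { a | ∀ B : Finset (Zd d), InFtilde A Bf B → -a - bt B ∉ plusZ S B }

end SaitoTakahashi

namespace SaitoTakahashi

section Aux

variable {d m : ℕ}

/-- The real-linear extension of an integral linear form. -/
def FRlin (F : Zd d →+ ℤ) : (Fin d → ℝ) →ₗ[ℝ] ℝ where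
  toFun v := ∑ i, ((F (Pi.single i 1) : ℤ) : ℝ) * v i
  map_add' x y := by
    simp only [Pi.add_apply, mul_add, Finset.sum_add_distrib]
  map_smul' c x := by
    simp only [Pi.smul_apply, smul_eq_mul, RingHom.id_apply, Finset.mul_sum]
    exact Finset.sum_congr rfl fun i _ => by ring

lemma F_eq_sum (F : Zd d →+ ℤ) (x : Zd d) :
    F x = ∑ i, x i * F (Pi.single i 1) := by
  have hx : x = ∑ i, Pi.single i (x i) := (Finset.univ_sum_single x).symm
  calc F x = F (∑ i, Pi.single i (x i)) := by rw [← hx]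
    _ = ∑ i, F (Pi.single i (x i)) := map_sum F _ _
    _ = ∑ i, x i * F (Pi.single i 1) := by
        refine Finset.sum_congr rfl fun i _ => ?_
        have : (Pi.single i (x i) : Zd d) = x i • (Pi.single i 1 : Zd d) := by
          funext j
          by_cases h : j = i <;> simp [Pi.single_apply, h]
        rw [this, map_zsmul, smul_eq_mul]

lemma FRlin_toR (F : Zd d →+ ℤ) (x : Zd d) : FRlin F (toR x) = (F x : ℝ) := by
  rw [F_eq_sum F x]
  push_cast
  simp only [FRlin, LinearMap.coe_mk, AddHom.coe_mk, toR]
  exact Finset.sum_congr rfl fun i _ => by ring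

lemma F_zero_of_mem_span {F : Zd d →+ ℤ} {B : Finset (Zd d)}
    (hvan : ∀ y ∈ B, F y = 0) {x : Zd d}
    (hx : toR x ∈ Submodule.span ℝ (toR '' (B : Set (Zd d)))) : F x = 0 := by
  have hle : Submodule.span ℝ (toR '' (B : Set (Zd d))) ≤ LinearMap.ker (FRlin F) := by
    rw [Submodule.span_le]
    rintro _ ⟨y, hy, rfl⟩
    simp only [SetLike.mem_coe, LinearMap.mem_ker, FRlin_toR]
    exact_mod_cast hvan y hy
  have := hle hx
  rw [LinearMap.mem_ker, FRlin_toR] at this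
  exact_mod_cast this

lemma zero_on_closure {G : Zd d →+ ℤ} {B : Finset (Zd d)} (h : ∀ x ∈ B, G x = 0) :
    ∀ z ∈ AddSubgroup.closure (B : Set (Zd d)), G z = 0 := by
  intro z hz
  have hle : AddSubgroup.closure (B : Set (Zd d)) ≤ G.ker := by
    rw [AddSubgroup.closure_le]
    intro x hx
    exact h x (Finset.mem_coe.mp hx)
  exact hle hz

lemma nonneg_on_NA {A : Finset (Zd d)} {G : Zd d →+ ℤ} (h : ∀ x ∈ A, 0 ≤ G x) :
    ∀ n ∈ NA A, 0 ≤ G n := by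
  intro n hn
  induction hn using AddSubmonoid.closure_induction with
  | mem x hx => exact h x hx
  | zero => simp
  | add x y _ _ hx hy => rw [map_add]; exact add_nonneg hx hy

variable {A : Finset (Zd d)} {Sc S : Set (Zd d)} {b : Fin m → Zd d}
  {Bf : Fin m → Finset (Zd d)} {bt : Finset (Zd d) → Zd d}

lemma bound_below (hset : Setting A Sc S b Bf) {G : Zd d →+ ℤ}
    (h : ∀ x ∈ A, 0 ≤ G x) : ∃ μ : ℤ, ∀ s ∈ Sc, μ ≤ G s := by
  obtain ⟨-, GS, hGS⟩ := hset.fg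
  rcases GS.eq_empty_or_nonempty with rfl | hne
  · refine ⟨0, fun s hs => ?_⟩
    rw [hGS] at hs
    obtain ⟨g, hg, -⟩ := hs
    simp at hg
  · obtain ⟨g0, hg0, hmin⟩ := GS.exists_min_image G hne
    refine ⟨G g0, fun s hs => ?_⟩
    rw [hGS] at hs
    obtain ⟨g, hg, n, hn, rfl⟩ := hs
    have h1 := nonneg_on_NA h n hn
    have h2 := hmin g hg
    rw [map_add]
    omega

lemma InFtilde_subset (hset : Setting A Sc S b Bf) {B : Finset (Zd d)}
    (h : InFtilde A Bf B) : B ⊆ A := by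
  rcases h with ⟨F, -, rfl⟩ | ⟨i, rfl⟩
  · exact Finset.filter_subset _ _
  · obtain ⟨G, hBA, -⟩ := hset.face i
    exact hBA

lemma supportFn (hset : Setting A Sc S b Bf) {B : Finset (Zd d)}
    (h : InFtilde A Bf B) :
    ∃ G : Zd d →+ ℤ, (∀ x ∈ A, 0 ≤ G x) ∧ ∀ x ∈ A, (G x = 0 ↔ x ∈ B) := by
  rcases h with ⟨F, hF, rfl⟩ | ⟨i, rfl⟩
  · exact ⟨F, hF.1, fun x hx => by simp [facetSet, Finset.mem_filter, hx]⟩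
  · obtain ⟨G, -, hG0, hGiff⟩ := hset.face i
    exact ⟨G, hG0, hGiff⟩

lemma not_mem_coset (hset : Setting A Sc S b Bf) {s : Zd d} (hs : s ∈ S)
    (i : Fin m) : s ∉ coset (b i) (Bf i) := by
  intro hc
  rw [hset.expr] at hs
  exact hs.2 (Set.mem_iUnion.mpr ⟨i, hc⟩)

lemma S_subset_Sc (hset : Setting A Sc S b Bf) : S ⊆ Sc := by
  rw [hset.expr]; exact fun s hs => hs.1

/-- Generic half of the duality: `S ⊆ ω(ω(S))`. -/
lemma subset_omega_omega :
    S ⊆ omegaS A (omegaS A S Bf bt) Bf bt := by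
  rintro a ha B hB ⟨c, hc, z, hz, heq⟩
  refine hc B hB ⟨a, ha, z, hz, ?_⟩
  have : -c - bt B = -(c + z) - bt B + z := by abel
  rw [this, ← heq]; abel

/-- Key step: from `a ∈ ω(ω(S))`, for each `B0 ∈ F̃` there is `B' ∈ F̃`
containing `B0` with `a + b_{B0} - b_{B'} ∈ S + ℤ(A∩B')`. -/
lemma step (hset : Setting A Sc S b Bf) {a : Zd d}
    (ha : a ∈ omegaS A (omegaS A S Bf bt) Bf bt) {B0 : Finset (Zd d)}
    (hB0 : InFtilde A Bf B0) :
    ∃ B', InFtilde A Bf B' ∧ B0 ⊆ B' ∧ a + bt B0 - bt B' ∈ plusZ S B' := by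
  classical
  set w : Zd d := ∑ x ∈ B0, x with hw
  have hwmem : w ∈ AddSubgroup.closure (B0 : Set (Zd d)) :=
    AddSubgroup.sum_mem _ fun x hx => AddSubgroup.subset_closure hx
  have spec : ∀ N : ℕ, ∃ B', InFtilde A Bf B' ∧
      a + bt B0 - (N : ℤ) • w - bt B' ∈ plusZ S B' := by
    intro N
    have hc : (-a - bt B0 + (N : ℤ) • w) ∉ omegaS A S Bf bt := by
      intro hcmem
      refine ha B0 hB0 ⟨_, hcmem, -((N : ℤ) • w),
        AddSubgroup.neg_mem _ (AddSubgroup.zsmul_mem _ hwmem N), ?_⟩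
      abel
    simp only [omegaS, Set.mem_setOf_eq, not_forall, not_not] at hc
    obtain ⟨B', hB', hmem⟩ := hc
    refine ⟨B', hB', ?_⟩
    have : a + bt B0 - (N : ℤ) • w - bt B' =
        -(-a - bt B0 + (N : ℤ) • w) - bt B' := by abel
    rw [this]
    exact hmem
  let f : ℕ → {B // B ∈ A.powerset} := fun N =>
    ⟨Classical.choose (spec N), Finset.mem_powerset.mpr
      (InFtilde_subset hset (Classical.choose_spec (spec N)).1)⟩
  have hf : ∀ N, InFtilde A Bf (f N).1 ∧
      a + bt B0 - (N : ℤ) • w - bt (f N).1 ∈ plusZ S (f N).1 :=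
    fun N => Classical.choose_spec (spec N)
  obtain ⟨B₁, hB₁⟩ := Finite.exists_infinite_fiber f
  have hinf : {N : ℕ | f N = B₁}.Infinite := by
    rw [← Set.infinite_coe_iff]
    exact hB₁
  obtain ⟨N₀, hN₀⟩ := hinf.nonempty
  have hN₀' : f N₀ = B₁ := hN₀
  have hB₁F : InFtilde A Bf B₁.1 := by rw [← hN₀']; exact (hf N₀).1
  by_cases hss : B0 ⊆ B₁.1
  · refine ⟨B₁.1, hB₁F, hss, ?_⟩
    have hmem := (hf N₀).2
    rw [hN₀'] at hmem
    obtain ⟨s, hs, z, hz, hzeq⟩ := hmem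
    have hwmem' : w ∈ AddSubgroup.closure (B₁.1 : Set (Zd d)) :=
      AddSubgroup.closure_mono (by exact_mod_cast hss) hwmem
    refine ⟨s, hs, z + (N₀ : ℤ) • w,
      AddSubgroup.add_mem _ hz (AddSubgroup.zsmul_mem _ hwmem' _), ?_⟩
    calc a + bt B0 - bt B₁.1
        = (a + bt B0 - (N₀ : ℤ) • w - bt B₁.1) + (N₀ : ℤ) • w := by abel
      _ = s + z + (N₀ : ℤ) • w := by rw [hzeq]
      _ = s + (z + (N₀ : ℤ) • w) := by abel
  · exfalso
    obtain ⟨x0, hx0B, hx0n⟩ := Finset.not_subset.mp hss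
    obtain ⟨G, hG0, hGiff⟩ := supportFn hset hB₁F
    have hB0A : B0 ⊆ A := InFtilde_subset hset hB0
    have hx0A : x0 ∈ A := hB0A hx0B
    have hGx0 : 1 ≤ G x0 := by
      have h1 := hG0 x0 hx0A
      have h2 := hGiff x0 hx0A
      rcases lt_or_eq_of_le h1 with h | h
      · omega
      · exact absurd (h2.mp h.symm) hx0n
    have hGw : 1 ≤ G w := by
      have : G w = ∑ x ∈ B0, G x := by rw [hw, map_sum]
      rw [this]
      calc (1 : ℤ) ≤ G x0 := hGx0
        _ ≤ ∑ x ∈ B0, G x :=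
          Finset.single_le_sum (fun x hx => hG0 x (hB0A hx)) hx0B
    obtain ⟨μ, hμ⟩ := bound_below hset hG0
    obtain ⟨N, hNfib, hNgt⟩ :=
      hinf.exists_gt (G a + G (bt B0) - G (bt B₁.1) - μ).toNat
    have hmem := (hf N).2
    rw [show f N = B₁ from hNfib] at hmem
    obtain ⟨s, hs, z, hz, hzeq⟩ := hmem
    have hGz : G z = 0 := by
      refine zero_on_closure (fun x hx => ?_) z hz
      exact (hGiff x (InFtilde_subset hset hB₁F hx)).mpr hx
    have hGs : μ ≤ G s := hμ s (S_subset_Sc hset hs)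
    have hGeq := congrArg G hzeq
    rw [map_add, map_sub, map_sub, map_add, map_zsmul, smul_eq_mul] at hGeq
    have hC : (G a + G (bt B0) - G (bt B₁.1) - μ : ℤ) < (N : ℤ) := by
      have h1 : (G a + G (bt B0) - G (bt B₁.1) - μ : ℤ) ≤
          ((G a + G (bt B0) - G (bt B₁.1) - μ : ℤ).toNat : ℤ) := Int.self_le_toNat _
      have h2 : (((G a + G (bt B0) - G (bt B₁.1) - μ : ℤ).toNat : ℕ) : ℤ) < (N : ℤ) := by
        exact_mod_cast hNgt
      omega
    have hN1 : (N : ℤ) * 1 ≤ (N : ℤ) * G w :=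
      mul_le_mul_of_nonneg_left hGw (by positivity)
    nlinarith [hGeq, hGz, hGs, hC, hN1]

/-- If a member of `F̃` contains a facet, it equals that facet (given `S ≠ ∅`). -/
lemma face_eq (hset : Setting A Sc S b Bf) (hSne : S.Nonempty) {F : Zd d →+ ℤ}
    (hF : IsFacetFn A F) {B' : Finset (Zd d)} (hB' : InFtilde A Bf B')
    (hsub : facetSet A F ⊆ B') : B' = facetSet A F := by
  classical
  set B0 := facetSet A F with hB0def
  have hsetEq : {a : Zd d | a ∈ A ∧ F a = 0} = (B0 : Set (Zd d)) := by
    ext x; simp [hB0def, facetSet, Finset.mem_filter]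
  have hH : Module.finrank ℝ ↥(Submodule.span ℝ (toR '' (B0 : Set (Zd d)))) = d - 1 := by
    rw [← hsetEq]; exact hF.2.2
  set H := Submodule.span ℝ (toR '' (B0 : Set (Zd d))) with hHdef
  set W := Submodule.span ℝ (toR '' (B' : Set (Zd d))) with hWdef
  have hHW : H ≤ W :=
    Submodule.span_mono (Set.image_mono (by exact_mod_cast hsub))
  obtain ⟨G, hG0, hGiff⟩ := supportFn hset hB'
  have hB'A : B' ⊆ A := InFtilde_subset hset hB'
  have hGzB : ∀ x ∈ B', G x = 0 := fun x hx => (hGiff x (hB'A hx)).mpr hx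
  have hvanB0 : ∀ y ∈ B0, F y = 0 := fun y hy => (Finset.mem_filter.mp hy).2
  by_cases hrk : Module.finrank ℝ ↥W = Module.finrank ℝ (Fin d → ℝ)
  · exfalso
    have hWtop : W = ⊤ := Submodule.eq_top_of_finrank_eq hrk
    have hGzero : ∀ x : Zd d, G x = 0 := by
      intro x
      have hx : toR x ∈ W := by rw [hWtop]; trivial
      exact F_zero_of_mem_span hGzB hx
    have hAB : B' = A :=
      Finset.Subset.antisymm hB'A fun x hx => (hGiff x hx).mp (hGzero x)
    rw [hAB] at hB'
    rcases hB' with ⟨F'', hF'', hAeq⟩ | ⟨j, hAeq⟩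
    · have hz : ∀ x ∈ A, F'' x = 0 := by
        intro x hx
        have hx' : x ∈ facetSet A F'' := hAeq ▸ hx
        exact (Finset.mem_filter.mp hx').2
      have hzz : ∀ x : Zd d, F'' x = 0 := by
        intro x
        have hx : x ∈ AddSubgroup.closure (A : Set (Zd d)) := by
          have : AddSubgroup.closure (A : Set (Zd d)) = ZA A := rfl
          rw [this, hset.latt]; trivial
        exact zero_on_closure hz x hx
      obtain ⟨y, hy⟩ := hF''.2.1 1
      rw [hzz y] at hy
      exact one_ne_zero hy.symm
    · obtain ⟨s, hs⟩ := hSne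
      refine not_mem_coset hset hs j ?_
      show s - b j ∈ AddSubgroup.closure ((Bf j : Finset (Zd d)) : Set (Zd d))
      have : AddSubgroup.closure ((Bf j : Finset (Zd d)) : Set (Zd d)) = ⊤ := by
        rw [← hAeq]
        have : AddSubgroup.closure (A : Set (Zd d)) = ZA A := rfl
        rw [this, hset.latt]
      rw [this]; trivial
  · have hVd : Module.finrank ℝ (Fin d → ℝ) = d := Module.finrank_fin_fun ℝ
    have h1 : Module.finrank ℝ ↥W ≤ Module.finrank ℝ (Fin d → ℝ) :=
      Submodule.finrank_le W
    have h2 : Module.finrank ℝ ↥H ≤ Module.finrank ℝ ↥W :=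
      Submodule.finrank_mono hHW
    have hWH : W = H := (Submodule.eq_of_le_of_finrank_le hHW (by omega)).symm
    apply Finset.Subset.antisymm _ hsub
    intro x hx
    have hxA : x ∈ A := hB'A hx
    have hxW : toR x ∈ W := Submodule.subset_span ⟨x, hx, rfl⟩
    rw [hWH] at hxW
    have hFx : F x = 0 := F_zero_of_mem_span hvanB0 hxW
    exact Finset.mem_filter.mpr ⟨hxA, hFx⟩

set_option maxHeartbeats 1000000 in
/-- `a ∈ ω(ω(S))` implies `a ∈ Sc` (given `S ≠ ∅`). -/
lemma omega_omega_mem_Sc (hset : Setting A Sc S b Bf) (hbt : MemB A b Bf bt)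
    (hSne : S.Nonempty) {a : Zd d}
    (ha : a ∈ omegaS A (omegaS A S Bf bt) Bf bt) : a ∈ Sc := by
  rw [hset.scored]
  intro F hF
  rw [← hset.sameF F hF]
  have hB0 : InFtilde A Bf (facetSet A F) := Or.inl ⟨F, hF, rfl⟩
  obtain ⟨B', hB', hsub, hmem⟩ := step hset ha hB0
  have hBeq : B' = facetSet A F := face_eq hset hSne hF hB' hsub
  rw [hBeq] at hmem
  obtain ⟨s, hs, z, hz, hzeq⟩ := hmem
  have ha' : a = s + z := by linear_combination hzeq
  have hFz : F z = 0 :=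
    zero_on_closure (fun x hx => (Finset.mem_filter.mp hx).2) z hz
  refine ⟨s, hs, ?_⟩
  rw [ha', map_add, hFz, add_zero]

/-- `a ∈ ω(ω(S))` implies `a` avoids the cosets `bᵢ + ℤ(A∩τᵢ)`. -/
lemma omega_omega_not_coset (hset : Setting A Sc S b Bf) (hbt : MemB A b Bf bt)
    {a : Zd d} (ha : a ∈ omegaS A (omegaS A S Bf bt) Bf bt) (i : Fin m) :
    a ∉ coset (b i) (Bf i) := by
  intro hcos
  have hz0 : a - b i ∈ AddSubgroup.closure ((Bf i : Finset (Zd d)) : Set (Zd d)) := hcos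
  have hB0 : InFtilde A Bf (Bf i) := Or.inr ⟨i, rfl⟩
  obtain ⟨B', hB', hsub, hmem⟩ := step hset ha hB0
  obtain ⟨j, hjeq, hδ⟩ := hbt.2 i B' hB' hsub
  obtain ⟨s, hs, z, hz, hzeq⟩ := hmem
  refine not_mem_coset hset hs j ?_
  show s - b j ∈ AddSubgroup.closure ((Bf j : Finset (Zd d)) : Set (Zd d))
  rw [hjeq]
  have hz0' : a - b i ∈ AddSubgroup.closure ((B' : Finset (Zd d)) : Set (Zd d)) :=
    AddSubgroup.closure_mono (by exact_mod_cast hsub) hz0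
  have hkey : s - b j = (a - b i) + ((b i + bt (Bf i)) - (b j + bt B')) - z := by
    linear_combination -hzeq
  rw [hkey]
  exact AddSubgroup.sub_mem _ (AddSubgroup.add_mem _ hz0' hδ) hz

end Aux

set_option maxHeartbeats 1000000 in
/-- Proposition 5.9, duality `ω(ω(S)) = S`.
`S = { a : 0 ∈ E(S)_τ(a) for all τ ∈ F̃ }`
`= { a : b_τ ∉ E(ω(S))_τ(−a) for every τ ∈ F̃ } = ω(ω(S))`. -/
theorem omega_omega_eq_self {d m : ℕ}
    (A : Finset (Zd d)) (Sc S : Set (Zd d))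
    (b : Fin m → Zd d) (Bf : Fin m → Finset (Zd d))
    (hset : Setting A Sc S b Bf) (hirr : Irredundant Sc S b Bf)
    (hSna : IsNASet A S)
    (bt : Finset (Zd d) → Zd d) (hbt : MemB A b Bf bt) :
    S = { a : Zd d | ∀ B : Finset (Zd d), InFtilde A Bf B → a ∈ plusZ S B } ∧
    S = { a : Zd d | ∀ B : Finset (Zd d), InFtilde A Bf B →
            -a - bt B ∉ plusZ (omegaS A S Bf bt) B } ∧
    S = omegaS A (omegaS A S Bf bt) Bf bt := by
  classical
  have claim1 : S = { a : Zd d | ∀ B : Finset (Zd d), InFtilde A Bf B → a ∈ plusZ S B } := by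
    ext a
    constructor
    · intro ha B hB
      exact ⟨a, ha, 0, AddSubgroup.zero_mem _, by abel⟩
    · intro h
      rw [hset.expr]
      constructor
      · rw [hset.scored]
        intro F hF
        rw [← hset.sameF F hF]
        obtain ⟨s, hs, z, hz, hzeq⟩ := h (facetSet A F) (Or.inl ⟨F, hF, rfl⟩)
        have hFz : F z = 0 :=
          zero_on_closure (fun x hx => (Finset.mem_filter.mp hx).2) z hz
        exact ⟨s, hs, by rw [hzeq, map_add, hFz, add_zero]⟩
      · intro hmem
        obtain ⟨i, hcos⟩ := Set.mem_iUnion.mp hmem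
        obtain ⟨s, hs, z, hz, hzeq⟩ := h (Bf i) (Or.inr ⟨i, rfl⟩)
        refine not_mem_coset hset hs i ?_
        show s - b i ∈ AddSubgroup.closure ((Bf i : Finset (Zd d)) : Set (Zd d))
        have hkey : s - b i = (a - b i) - z := by linear_combination -hzeq
        rw [hkey]
        exact AddSubgroup.sub_mem _ hcos hz
  have claim3 : S = omegaS A (omegaS A S Bf bt) Bf bt := by
    ext a
    constructor
    · exact fun ha => subset_omega_omega ha
    · intro ha
      rcases Set.eq_empty_or_nonempty S with hSe | hSne
      · exfalso
        have hFt : ∃ B, InFtilde A Bf B := by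
          rcases Nat.eq_zero_or_pos m with hm | hm
          · subst hm
            have hU : (⋃ i : Fin 0, coset (b i) (Bf i)) = ∅ := by
              simp
            have hScE : Sc = ∅ := by
              have := hset.expr
              rw [hU, Set.diff_empty] at this
              rw [← this, hSe]
            have heq : Sc = { x : Zd d | ∀ F : Zd d →+ ℤ, IsFacetFn A F → F x ∈ F '' Sc } :=
              hset.scored
            by_contra hno
            push_neg at hno
            have h0 : (0 : Zd d) ∈ Sc := by
              rw [heq]
              intro F hF
              exact absurd (Or.inl ⟨F, hF, rfl⟩ : InFtilde A Bf (facetSet A F)) (hno (facetSet A F))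
            rw [hScE] at h0
            exact h0
          · exact ⟨Bf ⟨0, hm⟩, Or.inr ⟨⟨0, hm⟩, rfl⟩⟩
        obtain ⟨B, hB⟩ := hFt
        have hωuniv : (-a - bt B) ∈ omegaS A S Bf bt := by
          rintro B' hB' ⟨s, hs, -⟩
          rw [hSe] at hs
          exact hs
        exact ha B hB ⟨-a - bt B, hωuniv, 0, AddSubgroup.zero_mem _, by abel⟩
      · rw [hset.expr]
        refine ⟨omega_omega_mem_Sc hset hbt hSne ha, ?_⟩
        intro hmem
        obtain ⟨i, hcos⟩ := Set.mem_iUnion.mp hmem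
        exact omega_omega_not_coset hset hbt ha i hcos
  exact ⟨claim1, claim3, claim3⟩

end SaitoTakahashi
end
end
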